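/- Let (L, G) be a built lattice and let S ⊆ G be a nested set. Then for every F ∈ L \ {⊥}, the set S_{>F} = {g ∈ S | g > F} has a unique minimal element (if it is nonempty). In other words, S forms a tree in the order graph of L. -/

import Mathlib

open scoped Classical

variable {L : Type*} [Lattice L] [BoundedOrder L] [Finite L]

/-- The join of a (finite) subset of `L`. -/
noncomputable def setJoin (S : Set L) : L := S.toFinite.toFinset.sup id

/-- The join of a subset of `L`, relative to a base point `a`. -/
noncomputable def joinFrom (a : L) (S : Set L) : L := a ⊔ setJoin S

/-- The `G`-factors of `F`: the maximal elements of `{g ∈ G | g ≤ F}`. -/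
def factors (G : Set L) (F : L) : Set L :=
  {g ∈ G | g ≤ F ∧ ∀ h ∈ G, h ≤ F → g ≤ h → g = h}

/-- `G` is a building set of the interval `[a, b]` of `L`: the join map
from the product of the intervals `[a, g]` over the `G`-factors `g` of `F`
to `[a, F]` is an order isomorphism, for every `F ∈ [a, b]`. -/
def IsBuildingIcc (a b : L) (G : Set L) : Prop :=
  G ⊆ Set.Icc a b ∧ a ∉ G ∧ ∀ F ∈ Set.Icc a b,
    ∃ e : (∀ g : factors G F, Set.Icc a (g : L)) ≃o Set.Icc a F,
      ∀ x, ((e x : L)) = joinFrom a (Set.range fun g => ((x g : L)))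

/-- `G` is a building set of the lattice `L`. -/
def IsBuilding (G : Set L) : Prop := IsBuildingIcc ⊥ ⊤ G

/-- `S` is a nested set of the built lattice `(L, G)`. -/
def IsNested (G S : Set L) : Prop :=
  S ⊆ G ∧ ∀ A ⊆ S, IsAntichain (· ≤ ·) A → 2 ≤ A.ncard → setJoin A ∉ G

/-- The building ideal generated by `g`. -/
def buildingIdeal (G : Set L) (g : L) : Set L := {F | g ∈ factors G F}

lemma le_setJoin {S : Set L} {x : L} (hx : x ∈ S) : x ≤ setJoin S :=
  Finset.le_sup (f := id) (S.toFinite.mem_toFinset.2 hx)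

lemma setJoin_le {S : Set L} {b : L} (h : ∀ x ∈ S, x ≤ b) : setJoin S ≤ b :=
  Finset.sup_le fun x hx => h x (S.toFinite.mem_toFinset.1 hx)

lemma setJoin_pair (a b : L) : setJoin {a, b} = a ⊔ b := by
  apply le_antisymm
  · exact setJoin_le (by rintro x (rfl | rfl) <;> simp)
  · exact sup_le (le_setJoin (by simp)) (le_setJoin (by simp))

lemma nested_comparable (G : Set L) (hG : IsBuilding G) (S : Set L) (hS : IsNested G S)
    (F : L) (hF : F ≠ ⊥) {g1 g2 : L} (h1 : g1 ∈ S) (h2 : g2 ∈ S)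
    (hF1 : F < g1) (hF2 : F < g2) : g1 ≤ g2 ∨ g2 ≤ g1 := by
  by_contra hc
  push_neg at hc
  obtain ⟨hc1, hc2⟩ := hc
  have hne : g1 ≠ g2 := fun h => hc1 h.le
  set h : L := g1 ⊔ g2 with hh
  have hhG : h ∉ G := by
    have hanti : IsAntichain (· ≤ ·) ({g1, g2} : Set L) := by
      rintro x (rfl | rfl) y (rfl | rfl) hxy <;> simp_all
    have := hS.2 {g1, g2} (by rintro x (rfl | rfl) <;> assumption) hanti
      (by rw [Set.ncard_pair hne])
    rwa [setJoin_pair] at this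
  have exists_factor : ∀ g ∈ G, g ≤ h → ∃ f ∈ factors G h, g ≤ f := by
    intro g hg hgh
    obtain ⟨f, hf, hmax⟩ := Set.Finite.exists_maximalFor id {x ∈ G | x ≤ h ∧ g ≤ x}
      (Set.toFinite _) ⟨g, hg, hgh, le_rfl⟩
    exact ⟨f, ⟨hf.1, hf.2.1, fun y hy hyh hfy =>
      le_antisymm hfy (hmax ⟨hy, hyh, hf.2.2.trans hfy⟩ hfy)⟩, hf.2.2⟩
  obtain ⟨f1, hf1, hg1f1⟩ := exists_factor g1 (hS.1 h1) le_sup_left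
  obtain ⟨f2, hf2, hg2f2⟩ := exists_factor g2 (hS.1 h2) le_sup_right
  by_cases hff : f1 = f2
  · have : h ≤ f1 := sup_le hg1f1 (hff ▸ hg2f2)
    have : h = f1 := le_antisymm this hf1.2.1
    exact hhG (this ▸ hf1.1)
  · obtain ⟨e, he⟩ := hG.2.2 h ⟨bot_le, le_top⟩
    -- the delta tuple supported at f : factors G h
    have key : ∀ (f : L) (hf : f ∈ factors G h), F ≤ f →
        ∀ g : factors G h, (g : L) ≠ f → ((e.symm ⟨F, bot_le, hF1.le.trans le_sup_left⟩) g : L) = ⊥ := by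
      intro f hf hFf g hg
      set t : ∀ g : factors G h, Set.Icc (⊥ : L) (g : L) :=
        fun g => if hgf : (g : L) = f then ⟨f, bot_le, hgf.ge⟩ else ⟨⊥, le_rfl, bot_le⟩ with ht
      have het : (e t : L) = f := by
        rw [he]
        unfold joinFrom
        apply le_antisymm
        · apply sup_le bot_le
          apply setJoin_le
          rintro x ⟨g', rfl⟩
          by_cases hgf : (g' : L) = f
          · simp only [ht, dif_pos hgf]
            exact le_rfl
          · simp only [ht, dif_neg hgf]
            exact bot_le
        · refine le_trans ?_ le_sup_right
          have : f ∈ Set.range fun g : factors G h => ((t g : L)) := by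
            refine ⟨⟨f, hf⟩, ?_⟩
            simp only [ht, dif_pos rfl]
          exact le_setJoin this
      set y := e.symm ⟨F, bot_le, hF1.le.trans le_sup_left⟩ with hy
      have hyt : y ≤ t := by
        rw [← e.le_iff_le, hy, e.apply_symm_apply]
        rw [← Subtype.coe_le_coe, het]
        exact hFf
      have := hyt g
      rw [← Subtype.coe_le_coe] at this
      simp only [ht, dif_neg hg] at this
      exact le_antisymm this bot_le
  -- now every component of y is ⊥
    set y := e.symm ⟨F, bot_le, hF1.le.trans le_sup_left⟩ with hy
    have hall : ∀ g : factors G h, (y g : L) = ⊥ := by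
      intro g
      by_cases hg : (g : L) = f1
      · exact key f2 hf2 (hF2.le.trans hg2f2) g (hg ▸ hff)
      · exact key f1 hf1 (hF1.le.trans hg1f1) g hg
    have : F = ⊥ := by
      have hF' : ((e y : L)) = F := by rw [hy, e.apply_symm_apply]
      rw [he] at hF'
      have : joinFrom ⊥ (Set.range fun g : factors G h => ((y g : L))) ≤ ⊥ := by
        apply sup_le le_rfl
        apply setJoin_le
        rintro x ⟨g, rfl⟩
        exact (hall g).le
      exact le_antisymm (hF' ▸ this) bot_le
    exact hF this

/-- A nested set forms a tree in the order graph of `L`: for every `F ≠ ⊥`,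
if the set `S_{>F} = {g ∈ S | F < g}` is nonempty then it has a unique minimum. -/
theorem nested_tree (G : Set L) (hG : IsBuilding G) (S : Set L) (hS : IsNested G S)
    (F : L) (hF : F ≠ ⊥) (hne : {g ∈ S | F < g}.Nonempty) :
    ∃ m ∈ {g ∈ S | F < g}, ∀ h ∈ {g ∈ S | F < g}, m ≤ h := by
  obtain ⟨m, hm, hmin⟩ := Set.Finite.exists_minimalFor id {g ∈ S | F < g}
    (Set.toFinite _) hne
  refine ⟨m, hm, fun h hh => ?_⟩
  rcases nested_comparable G hG S hS F hF hm.1 hh.1 hm.2 hh.2 with h1 | h1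
  · exact h1
  · exact hmin hh h1
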